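/- For every index m and every θ ∈ ℝ, the jump of the squared speed across the m-th spiral satisfies |W^R(θ)|² − |W^L(θ)|² = −(4 a² g_m e^{2a(θ−θ_m)}/(a²+1)) · Re( (1/sinh(πA)) · Σ_{k=0}^{M−1} 𝒜_{mk} g_k ). -/

import Mathlib

/-- The complex constant `A := −2ai/(a+i)`. -/
noncomputable def Aconst (a : ℝ) : ℂ := -2 * (a : ℂ) * Complex.I / ((a : ℂ) + Complex.I)

/-- The matrix coefficient
`𝒜_{mk} := e^{A(θ_k−θ_m)} · (e^{−πA)` if `k > m`, `cosh(πA)` if `k = m`, `e^{πA}` if `k < m)`. -/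
noncomputable def Amat (a : ℝ) (M : ℕ) (θs : Fin M → ℝ) (m k : Fin M) : ℂ :=
  Complex.exp (Aconst a * ((θs k : ℂ) - (θs m : ℂ))) *
    (if m < k then Complex.exp (-(Real.pi : ℂ) * Aconst a)
     else if k = m then Complex.cosh ((Real.pi : ℂ) * Aconst a)
     else Complex.exp ((Real.pi : ℂ) * Aconst a))

/-- The limit velocity profile on the `m`-th spiral from the right:
`W^R(θ) := e^{iθ} Σ_k (2a g_k/(e^{a(θ−θ_m)}(a−i))) ·
conj( exp((2a/(a+i))·a(θ−θ_m)) e^{A(θ_k−θ)} e^{2πχ_{k<m}A}/(1−e^{2πA}) )`. -/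
noncomputable def WR (a : ℝ) (M : ℕ) (g θs : Fin M → ℝ) (m : Fin M) (θ : ℝ) : ℂ :=
  Complex.exp (Complex.I * (θ : ℂ)) * ∑ k : Fin M,
    (2 * (a : ℂ) * (g k : ℂ) /
        ((Real.exp (a * (θ - θs m)) : ℂ) * ((a : ℂ) - Complex.I))) *
      (starRingEnd ℂ)
        (Complex.exp ((2 * (a : ℂ) / ((a : ℂ) + Complex.I)) * ((a * (θ - θs m) : ℝ) : ℂ)) *
          Complex.exp (Aconst a * ((θs k : ℂ) - (θ : ℂ))) *
          (Complex.exp (2 * (Real.pi : ℂ) * (if k < m then 1 else 0) * Aconst a) /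
            (1 - Complex.exp (2 * (Real.pi : ℂ) * Aconst a))))

/-- The limit velocity profile on the `m`-th spiral from the left: as `WR` but with the
indicator of `k < m` replaced by the indicator of `k ≤ m`. -/
noncomputable def WL (a : ℝ) (M : ℕ) (g θs : Fin M → ℝ) (m : Fin M) (θ : ℝ) : ℂ :=
  Complex.exp (Complex.I * (θ : ℂ)) * ∑ k : Fin M,
    (2 * (a : ℂ) * (g k : ℂ) /
        ((Real.exp (a * (θ - θs m)) : ℂ) * ((a : ℂ) - Complex.I))) *
      (starRingEnd ℂ)
        (Complex.exp ((2 * (a : ℂ) / ((a : ℂ) + Complex.I)) * ((a * (θ - θs m) : ℝ) : ℂ)) *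
          Complex.exp (Aconst a * ((θs k : ℂ) - (θ : ℂ))) *
          (Complex.exp (2 * (Real.pi : ℂ) * (if k ≤ m then 1 else 0) * Aconst a) /
            (1 - Complex.exp (2 * (Real.pi : ℂ) * Aconst a))))

/-!
The profiles `W^R` and `W^L` differ only in the `k = m` term, so by
`|z|² - |w|² = Re ((z - w) · conj (z + w))` the jump is governed by that term times the sum
`W^R + W^L`. Two observations make everything explicit. First, `2a²/(a+i) - A = 2a`, so the
phase `exp((2a/(a+i))·a(θ-θ_m)) · e^{A(θ_m-θ)}` is the real number `e^{2a(θ-θ_m)}`. Second,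
writing `z = πA`, the combination `(e^{2zχ_{k<m}} + e^{2zχ_{k≤m}}) / (1 - e^{2z})` equals
`-e^{z}`, `-cosh z` or `-e^{-z}` divided by `sinh z` according as `k < m`, `k = m` or `k > m`,
which produces `𝒜_{mk}`.
-/

open Complex ComplexConjugate
open scoped Real

namespace Complex

theorem sq_norm_sub_sq_norm (z w : ℂ) :
    ‖z‖ ^ 2 - ‖w‖ ^ 2 = ((z - w) * conj (z + w)).re := by
  simp only [Complex.sq_norm, normSq_apply, mul_re, sub_re, add_re, sub_im, add_im, conj_re,
    conj_im]
  ring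

theorem one_sub_exp_two_mul (z : ℂ) : 1 - exp (2 * z) = -2 * exp z * sinh z := by
  rw [two_mul, exp_add, sinh, exp_neg]
  field_simp
  ring

theorem exp_two_mul_ite_add_div {ι : Type*} [LinearOrder ι] {z : ℂ} (hz : exp (2 * z) ≠ 1)
    (k m : ι) :
    (exp (2 * z * (if k < m then 1 else 0)) + exp (2 * z * (if k ≤ m then 1 else 0))) /
        (1 - exp (2 * z)) =
      -(if m < k then exp (-z) else if k = m then cosh z else exp z) / sinh z := by
  have hs : sinh z ≠ 0 := by
    rintro hs
    exact hz (by linear_combination -(one_sub_exp_two_mul z) + 2 * exp z * hs)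
  rw [one_sub_exp_two_mul, div_eq_div_iff (by simp [hs, exp_ne_zero]) hs]
  rcases lt_trichotomy k m with h | rfl | h
  · simp only [h, h.le, h.not_gt, h.ne, if_true, if_false, mul_one]
    rw [two_mul, exp_add]; ring
  · simp only [lt_irrefl, le_refl, if_true, if_false, mul_one, mul_zero, exp_zero, cosh, sinh,
      exp_neg]
    rw [two_mul, exp_add]; field_simp; ring
  · simp only [h, h.not_ge, h.not_gt, if_true, if_false, mul_zero, exp_zero, exp_neg]
    field_simp; ring

end Complex

section Spiral

variable (a : ℝ)

theorem Aconst_re : (Aconst a).re = -(2 * a) / (a ^ 2 + 1) := by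
  simp only [Aconst, neg_mul, div_re, neg_re, mul_re, re_ofNat, ofReal_re, im_ofNat, ofReal_im,
    mul_zero, sub_zero, I_re, mul_im, zero_mul, add_zero, I_im, mul_one, sub_self, neg_zero, add_re,
    normSq_apply, add_im, zero_add, zero_div, neg_im]
  ring

variable {a} in
theorem exp_two_mul_pi_mul_Aconst_ne_one (ha : a ≠ 0) : exp (2 * (π * Aconst a)) ≠ 1 := by
  intro h
  have hre := congrArg (‖·‖) h
  simp only [norm_exp, norm_one, Real.exp_eq_one_iff, mul_re, re_ofNat, im_ofNat, ofReal_re,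
    ofReal_im, Aconst_re] at hre
  field_simp at hre
  simp [ha, Real.pi_ne_zero] at hre

theorem two_mul_div_add_I_mul_sub_Aconst : 2 * (a : ℂ) / (a + I) * a - Aconst a = 2 * a := by
  have : (a : ℂ) + I ≠ 0 := fun h => by simpa using congrArg im h
  rw [Aconst]
  field_simp
  ring

variable (θ θm : ℝ)

theorem exp_mul_exp_Aconst (θk : ℝ) :
    exp (2 * (a : ℂ) / (a + I) * ((a * (θ - θm) : ℝ) : ℂ)) * exp (Aconst a * (θk - θ)) =
      exp (Aconst a * (θk - θm)) * (Real.exp (2 * a * (θ - θm)) : ℂ) := by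
  rw [ofReal_exp, ← exp_add, ← exp_add]
  congr 1
  push_cast
  linear_combination (θ - θm : ℂ) * two_mul_div_add_I_mul_sub_Aconst a

theorem div_mul_conj_exp_mul_exp_Aconst (θk gk : ℝ) (β : ℂ) :
    2 * a * gk / ((Real.exp (a * (θ - θm)) : ℂ) * (a - I)) *
        conj (exp (2 * (a : ℂ) / (a + I) * ((a * (θ - θm) : ℝ) : ℂ)) *
          exp (Aconst a * (θk - θ)) * β) =
      2 * a * Real.exp (a * (θ - θm)) / (a - I) * gk *
        conj (exp (Aconst a * (θk - θm)) * β) := by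
  rw [exp_mul_exp_Aconst, mul_right_comm (exp _), map_mul, conj_ofReal,
    show 2 * a * (θ - θm) = a * (θ - θm) + a * (θ - θm) by ring, Real.exp_add]
  have : (a : ℂ) - I ≠ 0 := fun h => by simpa using congrArg im h
  push_cast
  field_simp

theorem two_mul_exp_div_sub_I_mul_conj :
    2 * a * Real.exp (a * (θ - θm)) / (a - I) *
        conj (2 * a * Real.exp (a * (θ - θm)) / (a - I)) =
      (4 * a ^ 2 * Real.exp (2 * a * (θ - θm)) / (a ^ 2 + 1) : ℝ) := by
  have hnorm : normSq (a - I) = a ^ 2 + 1 := by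
    simp only [normSq_apply, sub_re, ofReal_re, I_re, sub_zero, sub_im, ofReal_im, I_im, zero_sub]
    ring
  rw [mul_conj, ofReal_inj, map_div₀, map_mul, map_mul, hnorm, normSq_ofReal, normSq_ofReal,
    show 2 * a * (θ - θm) = a * (θ - θm) + a * (θ - θm) by ring, Real.exp_add, normSq_ofNat]
  ring

end Spiral

section Profiles

variable {a : ℝ} (ha : a ≠ 0) {M : ℕ} (g θs : Fin M → ℝ) (m : Fin M) (θ : ℝ)
include ha

theorem WR_sub_WL :
    WR a M g θs m θ - WL a M g θs m θ =
      exp (I * θ) * (2 * a * Real.exp (a * (θ - θs m)) / (a - I) * g m) := by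
  have hD : 1 - exp (2 * π * Aconst a) ≠ 0 :=
    sub_ne_zero.2 (by rw [mul_assoc]; exact (exp_two_mul_pi_mul_Aconst_ne_one ha).symm)
  simp only [WR, WL, div_mul_conj_exp_mul_exp_Aconst, ← mul_sub, ← Finset.sum_sub_distrib]
  rw [Finset.sum_eq_single m (fun k _ hk => by simp [lt_iff_le_and_ne, hk]) (by simp)]
  simp only [lt_irrefl, le_refl, if_true, if_false, sub_self, mul_zero, zero_mul, exp_zero,
    mul_one, one_mul, ← map_sub, ← sub_div, div_self hD, map_one]

theorem WR_add_WL :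
    WR a M g θs m θ + WL a M g θs m θ =
      -(exp (I * θ) * (2 * a * Real.exp (a * (θ - θs m)) / (a - I)) *
        conj ((1 / sinh (π * Aconst a)) * ∑ k : Fin M, Amat a M θs m k * g k)) := by
  have hz := exp_two_mul_pi_mul_Aconst_ne_one ha
  have hχ (x : ℂ) : 2 * (π : ℂ) * x * Aconst a = 2 * (π * Aconst a) * x := by ring
  simp only [WR, WL, div_mul_conj_exp_mul_exp_Aconst, ← mul_add, ← Finset.sum_add_distrib,
    ← map_add, ← add_div, hχ, mul_assoc 2 (π : ℂ) (Aconst a), exp_two_mul_ite_add_div hz]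
  simp only [Amat, neg_mul, map_mul, map_sum, map_div₀, map_neg, map_one, conj_ofReal,
    Finset.mul_sum, ← Finset.sum_neg_distrib]
  refine Finset.sum_congr rfl fun k _ => ?_
  ring

end Profiles

theorem speed_jump_across_spiral (a : ℝ) (ha : 0 < a) (M : ℕ)
    (g θs : Fin M → ℝ)
    (m : Fin M) (θ : ℝ) :
    ‖WR a M g θs m θ‖ ^ 2 - ‖WL a M g θs m θ‖ ^ 2 =
      -(4 * a ^ 2 * g m * Real.exp (2 * a * (θ - θs m)) / (a ^ 2 + 1)) *
        ((1 / Complex.sinh ((Real.pi : ℂ) * Aconst a)) *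
          ∑ k : Fin M, Amat a M θs m k * (g k : ℂ)).re := by
  set S := (1 / sinh (π * Aconst a)) * ∑ k : Fin M, Amat a M θs m k * g k
  set w : ℂ := 2 * a * Real.exp (a * (θ - θs m)) / (a - I)
  have hu : exp (I * θ) * conj (exp (I * θ)) = 1 := by
    rw [mul_conj, normSq_eq_norm_sq, norm_exp_I_mul_ofReal, one_pow, ofReal_one]
  rw [sq_norm_sub_sq_norm, WR_sub_WL ha.ne', WR_add_WL ha.ne']
  calc (exp (I * θ) * (w * g m) * conj (-(exp (I * θ) * w * conj S))).re
      = (-(exp (I * θ) * conj (exp (I * θ))) * (w * conj w) * g m * S).re := by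
        simp only [map_neg, map_mul, conj_conj]
        congr 1
        ring
    _ = _ := by
        rw [hu, two_mul_exp_div_sub_I_mul_conj]
        simp only [neg_mul, one_mul, ← ofReal_mul, neg_re, re_ofReal_mul]
        ring
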